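/- Let n ≥ 0 be an integer, C, D real, F(τ) := ∫_0^τ (1−s²)^{−(n+1)} ds, and a(τ) = ((1−τ)/2)^n·((1+τ)/2)^n·(C + D·F(τ)) on (−1,1). Define Q^n(τ) := Σ_{q=0}^{n+1} (−1)^q n^{[q]} C(n+1,q)(1+τ)^{n+1−q} a^{(n+1−q)}(τ) and g^n as in the g-recursion with p = n. Then Q^n(τ) = g^n(τ)·D for all τ ∈ (−1,1); in particular Q^n depends only on the constant D and not on C. -/

import Mathlib

noncomputable section

/-- The rising factorial `x^{[q]} = x(x+1)⋯(x+q-1)`, with `x^{[0]} = 1`. -/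
def risingFact (x : ℝ) (q : ℕ) : ℝ := ∏ i ∈ Finset.range q, (x + (i : ℝ))

/-- The falling factorial `x_{[q]} = x(x-1)⋯(x-q+1)`, with `x_{[0]} = 1`. -/
def fallingFact (x : ℝ) (q : ℕ) : ℝ := ∏ i ∈ Finset.range q, (x - (i : ℝ))

/-- `Q^n(τ) = Σ_{q=0}^{n+1} (-1)^q p^{[q]} C(n+1,q) (1+τ)^{n+1-q} a^{(n+1-q)}(τ)`. -/
def Qfun (p : ℕ) (a : ℝ → ℝ) (n : ℕ) (τ : ℝ) : ℝ :=
  ∑ q ∈ Finset.range (n + 2),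
    (-1 : ℝ) ^ q * risingFact (p : ℝ) q * (Nat.choose (n + 1) q : ℝ) *
      (1 + τ) ^ (n + 1 - q) * iteratedDeriv (n + 1 - q) a τ

/-- The functions `g^n` defined recursively by `g^0(τ) = 2^{-2p}(1-τ)⁻¹` and
`g^{n+1} = (1+τ)(g^n)' + (-1)^{n+1} 2^{-2p} p_{[n+1]} (1+τ)^{n+1}(1-τ)^{-n-2} - (p+n+1)g^n`. -/
def gFun (p : ℕ) : ℕ → ℝ → ℝ
  | 0 => fun τ => (2 : ℝ) ^ (-(2 * (p : ℤ))) * (1 - τ)⁻¹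
  | n + 1 => fun τ =>
      (1 + τ) * deriv (gFun p n) τ
        + (-1 : ℝ) ^ (n + 1) * (2 : ℝ) ^ (-(2 * (p : ℤ))) * fallingFact (p : ℝ) (n + 1) *
            (1 + τ) ^ (n + 1) * (1 - τ) ^ (-((n : ℤ) + 2))
        - ((p : ℝ) + (n : ℝ) + 1) * gFun p n τ

/-! ### Auxiliary definitions and lemmas -/

def Ff (n : ℕ) : ℝ → ℝ := fun τ => ∫ s in (0:ℝ)..τ, ((1 - s ^ 2) ^ (n + 1))⁻¹
def hf (n : ℕ) : ℝ → ℝ := fun τ => ((1 - τ ^ 2) ^ (n + 1))⁻¹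
def af (n : ℕ) (C D : ℝ) : ℝ → ℝ :=
  fun τ => ((1 - τ) / 2) ^ n * ((1 + τ) / 2) ^ n * (C + D * Ff n τ)

abbrev II : Set ℝ := Set.Ioo (-1 : ℝ) 1

lemma one_sub_ne {τ : ℝ} (hτ : τ ∈ II) : 1 - τ ≠ 0 := by
  have := hτ.2; intro h; nlinarith
lemma one_add_ne {τ : ℝ} (hτ : τ ∈ II) : 1 + τ ≠ 0 := by
  have := hτ.1; intro h; nlinarith
lemma one_sub_sq_ne {τ : ℝ} (hτ : τ ∈ II) : 1 - τ ^ 2 ≠ 0 := by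
  have h : 1 - τ ^ 2 = (1 - τ) * (1 + τ) := by ring
  rw [h]; exact mul_ne_zero (one_sub_ne hτ) (one_add_ne hτ)

lemma hf_contDiffOn (n : ℕ) : ContDiffOn ℝ (⊤ : ℕ∞) (hf n) II := by
  apply ContDiffOn.inv
  · exact (((contDiff_const.sub (contDiff_id.pow 2)).pow (n+1))).contDiffOn
  · exact fun x hx => pow_ne_zero _ (one_sub_sq_ne hx)

lemma hasDerivAt_Ff (n : ℕ) {τ : ℝ} (hτ : τ ∈ II) :
    HasDerivAt (Ff n) (hf n τ) τ := by
  have hcont : Continuous fun s : ℝ => (1 - s ^ 2) ^ (n + 1) := by continuity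
  have hca : ContinuousAt (fun s : ℝ => ((1 - s ^ 2) ^ (n + 1))⁻¹) τ :=
    hcont.continuousAt.inv₀ (pow_ne_zero _ (one_sub_sq_ne hτ))
  have hmeas : Measurable (fun s : ℝ => ((1 - s ^ 2) ^ (n + 1))⁻¹) := hcont.measurable.inv
  have hint : IntervalIntegrable (fun s : ℝ => ((1 - s ^ 2) ^ (n + 1))⁻¹)
      MeasureTheory.volume 0 τ := by
    apply ContinuousOn.intervalIntegrable
    intro x hx
    have hx' : x ∈ II := Set.ordConnected_Ioo.uIcc_subset
      (by constructor <;> norm_num : (0:ℝ) ∈ II) hτ hx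
    exact (hcont.continuousAt.inv₀ (pow_ne_zero _ (one_sub_sq_ne hx'))).continuousWithinAt
  exact intervalIntegral.integral_hasDerivAt_right hint
    (hmeas.stronglyMeasurable.stronglyMeasurableAtFilter) hca

lemma Ff_contDiffOn (n : ℕ) : ContDiffOn ℝ (⊤ : ℕ∞) (Ff n) II := by
  rw [contDiffOn_infty_iff_deriv_of_isOpen isOpen_Ioo]
  refine ⟨fun τ hτ => (hasDerivAt_Ff n hτ).differentiableAt.differentiableWithinAt, ?_⟩
  exact (hf_contDiffOn n).congr fun τ hτ => (hasDerivAt_Ff n hτ).deriv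

lemma af_contDiffOn (n : ℕ) (C D : ℝ) : ContDiffOn ℝ (⊤ : ℕ∞) (af n C D) II := by
  apply ContDiffOn.mul
  · exact ((((contDiff_const.sub contDiff_id).div_const 2).pow n).mul
      (((contDiff_const.add contDiff_id).div_const 2).pow n)).contDiffOn
  · exact contDiffOn_const.add (contDiffOn_const.mul (Ff_contDiffOn n))

lemma iter_af_contDiffOn (n : ℕ) (C D : ℝ) (k : ℕ) :
    ContDiffOn ℝ (⊤ : ℕ∞) (iteratedDeriv k (af n C D)) II := by
  induction k with
  | zero => simpa [iteratedDeriv_zero] using af_contDiffOn n C D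
  | succ k ih =>
    rw [iteratedDeriv_succ]
    exact ((contDiffOn_infty_iff_deriv_of_isOpen isOpen_Ioo).1 ih).2

lemma hasDerivAt_iter_af (n : ℕ) (C D : ℝ) (k : ℕ) {τ : ℝ} (hτ : τ ∈ II) :
    HasDerivAt (iteratedDeriv k (af n C D)) (iteratedDeriv (k + 1) (af n C D) τ) τ := by
  have hd : DifferentiableAt ℝ (iteratedDeriv k (af n C D)) τ :=
    (((iter_af_contDiffOn n C D k).differentiableOn (by simp)) τ
      hτ).differentiableAt (isOpen_Ioo.mem_nhds hτ)
  rw [iteratedDeriv_succ]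
  exact hd.hasDerivAt

lemma gFun_contDiffOn (p : ℕ) (m : ℕ) : ContDiffOn ℝ (⊤ : ℕ∞) (gFun p m) II := by
  induction m with
  | zero =>
    exact contDiffOn_const.mul (((contDiff_const.sub contDiff_id).contDiffOn).inv
      fun x hx => one_sub_ne hx)
  | succ m ih =>
    have hder : ContDiffOn ℝ (⊤ : ℕ∞) (deriv (gFun p m)) II :=
      ((contDiffOn_infty_iff_deriv_of_isOpen isOpen_Ioo).1 ih).2
    have hzp : ContDiffOn ℝ (⊤ : ℕ∞) (fun τ : ℝ => (1 - τ) ^ (-((m : ℤ) + 2))) II := by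
      have h : ∀ τ ∈ II, ((1 - τ) ^ (m + 2))⁻¹ = (1 - τ) ^ (-((m : ℤ) + 2)) := by
        intro τ hτ
        rw [← zpow_natCast (1 - τ) (m + 2), ← zpow_neg]
        norm_num
      exact (ContDiffOn.inv (((contDiff_const.sub contDiff_id).pow (m+2)).contDiffOn)
        fun x hx => pow_ne_zero _ (one_sub_ne hx)).congr fun x hx => (h x hx).symm
    apply ContDiffOn.sub
    apply ContDiffOn.add
    · exact ((contDiff_const.add contDiff_id).contDiffOn).mul hder
    · exact (contDiffOn_const.mul (((contDiff_const.add contDiff_id).pow (m+1)).contDiffOn)).mul hzp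
    · exact contDiffOn_const.mul ih

lemma hasDerivAt_gFun (p m : ℕ) {τ : ℝ} (hτ : τ ∈ II) :
    HasDerivAt (gFun p m) (deriv (gFun p m) τ) τ :=
  ((((gFun_contDiffOn p m).differentiableOn (by simp)) τ hτ).differentiableAt
    (isOpen_Ioo.mem_nhds hτ)).hasDerivAt

lemma mulpow (k : ℕ) (x : ℝ) : x * ((k : ℝ) * x ^ (k - 1)) = (k : ℝ) * x ^ k := by
  cases k with
  | zero => simp
  | succ k => push_cast; ring

lemma risingFact_succ (x : ℝ) (q : ℕ) :
    risingFact x (q + 1) = risingFact x q * (x + q) := Finset.prod_range_succ _ _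

lemma fallingFact_succ (x : ℝ) (q : ℕ) :
    fallingFact x (q + 1) = fallingFact x q * (x - q) := Finset.prod_range_succ _ _

lemma Qrec (n : ℕ) (a : ℝ → ℝ) (m : ℕ) {τ : ℝ}
    (hiter : ∀ k, HasDerivAt (iteratedDeriv k a) (iteratedDeriv (k + 1) a τ) τ) :
    Qfun n a (m + 1) τ
      = (1 + τ) * deriv (Qfun n a m) τ - ((n : ℝ) + m + 1) * Qfun n a m τ := by
  classical
  set A : ℕ → ℝ := fun k => iteratedDeriv k a τ with hA
  set B : ℕ → ℝ := fun k => (1 + τ) ^ k * A k with hB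
  set cc : ℕ → ℕ → ℝ := fun M q => (-1 : ℝ) ^ q * risingFact (n : ℝ) q * (Nat.choose M q : ℝ)
    with hcc
  have hS : HasDerivAt (Qfun n a m)
      (∑ q ∈ Finset.range (m + 2), cc (m + 1) q *
        (((m + 1 - q : ℕ) : ℝ) * (1 + τ) ^ (m + 1 - q - 1) * A (m + 1 - q)
          + (1 + τ) ^ (m + 1 - q) * A (m + 1 - q + 1))) τ := by
    have : Qfun n a m = fun t => ∑ q ∈ Finset.range (m + 2),
        cc (m + 1) q * (1 + t) ^ (m + 1 - q) * iteratedDeriv (m + 1 - q) a t := rfl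
    rw [this]
    apply HasDerivAt.fun_sum
    intro q _
    have h1 : HasDerivAt (fun t : ℝ => (1 + t) ^ (m + 1 - q))
        (((m + 1 - q : ℕ) : ℝ) * (1 + τ) ^ (m + 1 - q - 1)) τ := by
      exact (((hasDerivAt_id τ).const_add 1).pow (m + 1 - q)).congr_deriv (by simp)
    have := ((h1.const_mul (cc (m + 1) q)).mul (hiter (m + 1 - q)))
    exact this.congr_deriv (by ring)
  rw [hS.deriv]
  -- pure algebra on sums now
  have hq1 : ∀ q ∈ Finset.range (m + 2), m + 1 - q + 1 = m + 2 - q := by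
    intro q hq; simp only [Finset.mem_range] at hq; omega
  have step1 : (1 + τ) * (∑ q ∈ Finset.range (m + 2), cc (m + 1) q *
        (((m + 1 - q : ℕ) : ℝ) * (1 + τ) ^ (m + 1 - q - 1) * A (m + 1 - q)
          + (1 + τ) ^ (m + 1 - q) * A (m + 1 - q + 1)))
      - ((n : ℝ) + m + 1) * ∑ q ∈ Finset.range (m + 2),
          cc (m + 1) q * (1 + τ) ^ (m + 1 - q) * A (m + 1 - q)
      = ∑ q ∈ Finset.range (m + 2), (cc (m + 1) q * B (m + 2 - q)
          - ((n : ℝ) + q) * cc (m + 1) q * B (m + 1 - q)) := by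
    rw [Finset.mul_sum, Finset.mul_sum, ← Finset.sum_sub_distrib]
    apply Finset.sum_congr rfl
    intro q hq
    have hle : q ≤ m + 1 := by simp only [Finset.mem_range] at hq; omega
    have h2 : ((m + 1 - q : ℕ) : ℝ) = (m : ℝ) + 1 - q := by
      push_cast [Nat.cast_sub (by omega : q ≤ m + 1)]; ring
    have h3 : (1 + τ) * (((m + 1 - q : ℕ) : ℝ) * (1 + τ) ^ (m + 1 - q - 1))
        = ((m + 1 - q : ℕ) : ℝ) * (1 + τ) ^ (m + 1 - q) := mulpow _ _
    have h4 : m + 1 - q + 1 = m + 2 - q := by omega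
    rw [hB]
    simp only [h4]
    rw [← h4]
    calc (1 + τ) * (cc (m + 1) q *
          (((m + 1 - q : ℕ) : ℝ) * (1 + τ) ^ (m + 1 - q - 1) * A (m + 1 - q)
            + (1 + τ) ^ (m + 1 - q) * A (m + 1 - q + 1)))
        - ((n : ℝ) + m + 1) * (cc (m + 1) q * (1 + τ) ^ (m + 1 - q) * A (m + 1 - q))
        = cc (m + 1) q * (((1 + τ) * (((m + 1 - q : ℕ) : ℝ) * (1 + τ) ^ (m + 1 - q - 1)))
              * A (m + 1 - q) + (1 + τ) ^ (m + 1 - q + 1) * A (m + 1 - q + 1))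
          - ((n : ℝ) + m + 1) * (cc (m + 1) q * (1 + τ) ^ (m + 1 - q) * A (m + 1 - q)) := by
          ring
      _ = _ := by rw [h3, h2]; ring
  have hQm : Qfun n a m τ = ∑ q ∈ Finset.range (m + 2),
      cc (m + 1) q * (1 + τ) ^ (m + 1 - q) * A (m + 1 - q) := rfl
  rw [hQm, step1]
  -- LHS : Qfun n a (m+1) τ
  have hL : Qfun n a (m + 1) τ
      = ∑ q ∈ Finset.range (m + 3), cc (m + 2) q * B (m + 2 - q) := by
    apply Finset.sum_congr rfl
    intro q _
    rw [hB]; ring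
  have hidx : ∀ k, m + 2 - (k + 1) = m + 1 - k := fun k => by omega
  have hcz : cc (m + 1) (m + 2) = 0 := by
    rw [hcc]; simp [Nat.choose_eq_zero_of_lt (by omega : m + 1 < m + 2)]
  have hzero : cc (m + 2) 0 = cc (m + 1) 0 := by rw [hcc]; simp
  rw [hL, Finset.sum_range_succ' (fun q => cc (m + 2) q * B (m + 2 - q)) (m + 2)]
  simp only [hidx, Nat.sub_zero]
  rw [hzero]
  have hpt : ∀ q ∈ Finset.range (m + 2),
      cc (m + 2) (q + 1) * B (m + 1 - q)
        = cc (m + 1) (q + 1) * B (m + 1 - q) - ((n : ℝ) + q) * cc (m + 1) q * B (m + 1 - q) := by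
    intro q _
    have hch : (Nat.choose (m + 2) (q + 1) : ℝ)
        = (Nat.choose (m + 1) q : ℝ) + (Nat.choose (m + 1) (q + 1) : ℝ) := by
      rw [← Nat.cast_add, ← Nat.choose_succ_succ]
    rw [hcc]
    simp only [risingFact_succ]
    rw [hch]
    ring
  rw [Finset.sum_congr rfl hpt, Finset.sum_sub_distrib, Finset.sum_sub_distrib,
    Finset.sum_range_succ' (fun q => cc (m + 1) q * B (m + 2 - q)) (m + 1)]
  simp only [hidx, Nat.sub_zero]
  have hlast : ∑ q ∈ Finset.range (m + 2), cc (m + 1) (q + 1) * B (m + 1 - q)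
      = ∑ q ∈ Finset.range (m + 1), cc (m + 1) (q + 1) * B (m + 1 - q) := by
    rw [Finset.sum_range_succ]
    simp [hcz]
  rw [hlast]
  ring

def Ef (n : ℕ) (C D : ℝ) (m : ℕ) : ℝ → ℝ := fun τ =>
  (-1 : ℝ) ^ (m + 1) * fallingFact (n : ℝ) (m + 1) * (2 : ℝ) ^ (-(2 * (n : ℤ))) *
    (1 + τ) ^ ((n : ℤ) + m + 1) * (1 - τ) ^ ((n : ℤ) - m - 1) * (C + D * Ff n τ)

def Ed (n : ℕ) (C D : ℝ) (m : ℕ) : ℝ → ℝ := fun τ =>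
  (-1 : ℝ) ^ (m + 1) * fallingFact (n : ℝ) (m + 1) * (2 : ℝ) ^ (-(2 * (n : ℤ))) *
    ( ((n : ℝ) + m + 1) * (1 + τ) ^ ((n : ℤ) + m) * (1 - τ) ^ ((n : ℤ) - m - 1) * (C + D * Ff n τ)
      - ((n : ℝ) - m - 1) * (1 + τ) ^ ((n : ℤ) + m + 1) * (1 - τ) ^ ((n : ℤ) - m - 2) * (C + D * Ff n τ)
      + (1 + τ) ^ ((n : ℤ) + m + 1) * (1 - τ) ^ ((n : ℤ) - m - 1) * (D * hf n τ) )

lemma hasDerivAt_Ef (n : ℕ) (C D : ℝ) (m : ℕ) {τ : ℝ} (hτ : τ ∈ II) :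
    HasDerivAt (Ef n C D m) (Ed n C D m τ) τ := by
  have hu := one_add_ne hτ
  have hv := one_sub_ne hτ
  have h1 : HasDerivAt (fun t : ℝ => (1 + t) ^ ((n : ℤ) + m + 1))
      ((((n : ℤ) + m + 1 : ℤ) : ℝ) * (1 + τ) ^ ((n : ℤ) + m)) τ := by
    have := (hasDerivAt_zpow ((n : ℤ) + m + 1) (1 + τ) (Or.inl hu)).comp τ
      ((hasDerivAt_id τ).const_add 1)
    have he : ((n : ℤ) + m + 1 - 1) = (n : ℤ) + m := by ring
    simpa [Function.comp_def, he] using this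
  have h2 : HasDerivAt (fun t : ℝ => (1 - t) ^ ((n : ℤ) - m - 1))
      (-((((n : ℤ) - m - 1 : ℤ) : ℝ) * (1 - τ) ^ ((n : ℤ) - m - 2))) τ := by
    have := (hasDerivAt_zpow ((n : ℤ) - m - 1) (1 - τ) (Or.inl hv)).comp τ
      ((hasDerivAt_id τ).const_sub 1)
    have he : ((n : ℤ) - m - 1 - 1) = (n : ℤ) - m - 2 := by ring
    simpa [Function.comp_def, he] using this
  have h3 : HasDerivAt (fun t : ℝ => C + D * Ff n t) (D * hf n τ) τ :=
    ((hasDerivAt_Ff n hτ).const_mul D).const_add C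
  have := (((h1.mul h2).mul h3).const_mul
    ((-1 : ℝ) ^ (m + 1) * fallingFact (n : ℝ) (m + 1) * (2 : ℝ) ^ (-(2 * (n : ℤ)))))
  convert (this : HasDerivAt _ _ τ) using 1
  · rfl
  · rfl
  · funext t
    show Ef n C D m t = _
    unfold Ef
    simp only [Pi.mul_apply]
    ring
  · show Ed n C D m τ = _
    unfold Ed
    simp only [Pi.mul_apply]
    push_cast
    ring


lemma Ealg (n : ℕ) (C D : ℝ) (m : ℕ) {τ : ℝ} (hτ : τ ∈ II) :
    (1 + τ) * Ed n C D m τ - ((n : ℝ) + m + 1) * Ef n C D m τ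
      = (-1 : ℝ) ^ (m + 1) * (2 : ℝ) ^ (-(2 * (n : ℤ))) * fallingFact (n : ℝ) (m + 1) *
          (1 + τ) ^ (m + 1) * (1 - τ) ^ (-((m : ℤ) + 2)) * D
        + Ef n C D (m + 1) τ := by
  have hu := one_add_ne hτ
  have hv := one_sub_ne hτ
  have huv : (1 : ℝ) - τ ^ 2 = (1 + τ) * (1 - τ) := by ring
  have he1 : ((n : ℤ) + (m + 1 : ℕ) + 1) = (n : ℤ) + m + 1 + 1 := by push_cast; ring
  have he2 : ((n : ℤ) - (m + 1 : ℕ) - 1) = (n : ℤ) - m - 2 := by push_cast; ring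
  simp only [Ed, Ef, hf, fallingFact_succ, he1, he2, huv, mul_pow]
  have d1 : ∀ z : ℤ, (1 + τ) ^ (z + 1) = (1 + τ) ^ z * (1 + τ) := fun z =>
    zpow_add_one₀ hu z
  have d2 : ∀ z : ℤ, (1 - τ) ^ (z - 1) = (1 - τ) ^ z * (1 - τ)⁻¹ := fun z => by
    rw [zpow_sub_one₀ hv]
  have d3 : (1 + τ) ^ ((n : ℤ) + m) = (1 + τ) ^ (n : ℕ) * (1 + τ) ^ (m : ℕ) := by
    rw [zpow_add₀ hu, zpow_natCast, zpow_natCast]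
  have d4 : (1 - τ) ^ ((n : ℤ) - m - 2) = (1 - τ) ^ (n : ℕ) * ((1 - τ) ^ (m : ℕ))⁻¹ *
      ((1 - τ) ^ 2)⁻¹ := by
    rw [show (n : ℤ) - m - 2 = (n : ℤ) - m - 2 from rfl, show ((n : ℤ) - m - 2) =
      ((n : ℤ)) + (-(m : ℤ)) + (-(2 : ℤ)) by ring, zpow_add₀ hv, zpow_add₀ hv,
      zpow_neg, zpow_neg, zpow_natCast, zpow_natCast]
    norm_num
  have d5 : (1 - τ) ^ (-((m : ℤ) + 2)) = ((1 - τ) ^ (m : ℕ))⁻¹ * ((1 - τ) ^ 2)⁻¹ := by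
    rw [show -((m : ℤ) + 2) = (-(m : ℤ)) + (-(2 : ℤ)) by ring, zpow_add₀ hv,
      zpow_neg, zpow_neg, zpow_natCast]
    norm_num
  rw [show ((n : ℤ) + m + 1 + 1) = ((n : ℤ) + m) + 1 + 1 by ring,
    show ((n : ℤ) + m + 1) = ((n : ℤ) + m) + 1 by ring,
    show ((n : ℤ) - m - 1) = ((n : ℤ) - m - 2) + 1 by ring]
  simp only [zpow_add_one₀ hu, zpow_add_one₀ hv, d3, d4, d5]
  field_simp
  push_cast
  ring

lemma hasDerivAt_af (n : ℕ) (C D : ℝ) {τ : ℝ} (hτ : τ ∈ II) :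
    HasDerivAt (af n C D)
      ( ((n : ℝ) * ((1 - τ) / 2) ^ (n - 1) * (-(1 / 2))) * ((1 + τ) / 2) ^ n * (C + D * Ff n τ)
        + ((1 - τ) / 2) ^ n * ((n : ℝ) * ((1 + τ) / 2) ^ (n - 1) * (1 / 2)) * (C + D * Ff n τ)
        + ((1 - τ) / 2) ^ n * ((1 + τ) / 2) ^ n * (D * hf n τ) ) τ := by
  have h1 : HasDerivAt (fun t : ℝ => ((1 - t) / 2) ^ n)
      ((n : ℝ) * ((1 - τ) / 2) ^ (n - 1) * (-(1 / 2))) τ := by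
    have := (((hasDerivAt_id τ).const_sub 1).div_const 2).pow n
    exact this.congr_deriv (by norm_num)
  have h2 : HasDerivAt (fun t : ℝ => ((1 + t) / 2) ^ n)
      ((n : ℝ) * ((1 + τ) / 2) ^ (n - 1) * (1 / 2)) τ := by
    have := (((hasDerivAt_id τ).const_add 1).div_const 2).pow n
    exact this.congr_deriv (by norm_num)
  have h3 : HasDerivAt (fun t : ℝ => C + D * Ff n t) (D * hf n τ) τ :=
    ((hasDerivAt_Ff n hτ).const_mul D).const_add C
  have := (h1.mul h2).mul h3
  exact this.congr_deriv (by simp only [Pi.mul_apply]; ring)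

lemma cast_mul_pow_sub_one (k : ℕ) (x : ℝ) (hx : x ≠ 0) :
    (k : ℝ) * x ^ (k - 1) = (k : ℝ) * x ^ k * x⁻¹ := by
  cases k with
  | zero => simp
  | succ k =>
    simp only [Nat.add_sub_cancel, pow_succ]
    field_simp

lemma Qbase (n : ℕ) (C D : ℝ) {τ : ℝ} (hτ : τ ∈ II) :
    Qfun n (af n C D) 0 τ = gFun n 0 τ * D + Ef n C D 0 τ := by
  have hu := one_add_ne hτ
  have hv := one_sub_ne hτ
  have hQ : Qfun n (af n C D) 0 τ
      = (1 + τ) * deriv (af n C D) τ - (n : ℝ) * af n C D τ := by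
    unfold Qfun
    rw [Finset.sum_range_succ, Finset.sum_range_succ, Finset.sum_range_zero]
    simp [risingFact, iteratedDeriv_one, iteratedDeriv_zero]
    ring
  rw [hQ, (hasDerivAt_af n C D hτ).deriv]
  unfold af gFun Ef hf
  have huv : (1 : ℝ) - τ ^ 2 = (1 + τ) * (1 - τ) := by ring
  rw [huv, cast_mul_pow_sub_one n _ (div_ne_zero hv two_ne_zero),
    cast_mul_pow_sub_one n _ (div_ne_zero hu two_ne_zero)]
  have fl1 : fallingFact (n : ℝ) 1 = (n : ℝ) := by simp [fallingFact]
  simp only [Nat.cast_zero, add_zero, sub_zero, fl1, pow_one]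
  rw [show -(2*(n:ℤ)) = (-(n:ℤ)) + (-(n:ℤ)) by ring,
    zpow_add₀ (two_ne_zero : (2:ℝ) ≠ 0), zpow_add_one₀ hu, zpow_sub_one₀ hv]
  simp only [zpow_neg, zpow_natCast]
  simp only [div_pow, mul_pow]
  field_simp
  ring

lemma main_ind (n : ℕ) (C D : ℝ) (m : ℕ) :
    ∀ τ ∈ II, Qfun n (af n C D) m τ = gFun n m τ * D + Ef n C D m τ := by
  induction m with
  | zero => exact fun τ hτ => Qbase n C D hτ
  | succ m ih =>
    intro τ hτ
    rw [Qrec n (af n C D) m (fun k => hasDerivAt_iter_af n C D k hτ)]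
    have heq : deriv (Qfun n (af n C D) m) τ
        = deriv (fun t => gFun n m t * D + Ef n C D m t) τ := by
      apply Filter.EventuallyEq.deriv_eq
      filter_upwards [isOpen_Ioo.mem_nhds hτ] with t ht
      exact ih t ht
    have hGE : HasDerivAt (fun t => gFun n m t * D + Ef n C D m t)
        (deriv (gFun n m) τ * D + Ed n C D m τ) τ :=
      ((hasDerivAt_gFun n m hτ).mul_const D).add (hasDerivAt_Ef n C D m hτ)
    rw [heq, hGE.deriv, ih τ hτ]
    show _ = gFun n (m + 1) τ * D + Ef n C D (m + 1) τ
    simp only [gFun]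
    linear_combination (Ealg n C D m hτ)

/-- For `p = ℓ = n` (here `n_{[n+1]} = 0` kills the `(C + D·F)`-term):
`Q^n(τ) = g^n(τ)·D` on `(-1,1)`; in particular `Q^n` depends only on `D`, not on `C`. -/
theorem Qfun_at_p_eq_n_depends_only_on_D
    (n : ℕ) (C D : ℝ) (F : ℝ → ℝ)
    (hF : F = fun τ => ∫ s in (0 : ℝ)..τ, ((1 - s ^ 2) ^ (n + 1))⁻¹)
    (a : ℝ → ℝ)
    (ha : a = fun τ => ((1 - τ) / 2) ^ n * ((1 + τ) / 2) ^ n * (C + D * F τ)) :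
    ∀ τ ∈ Set.Ioo (-1 : ℝ) 1, Qfun n a n τ = gFun n n τ * D := by
  have hFf : F = Ff n := by rw [hF]; rfl
  have haf : a = af n C D := by rw [ha, hFf]; rfl
  intro τ hτ
  rw [haf, main_ind n C D n τ hτ]
  have hfz : fallingFact (n : ℝ) (n + 1) = 0 := by
    apply Finset.prod_eq_zero (Finset.self_mem_range_succ n)
    simp
  simp [Ef, hfz]
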